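/- Let L¹ and L² be mutually weak orthogonal Latin squares of order d₁d₂ on Z_{d₁d₂}, and define orthonormal bases B^s = {|φ^s_{n,m,l}⟩} of C^{d₁} ⊗ C^{d₂} ⊗ C^{d₁d₂} by |φ^s_{n,m,l}⟩ = (1/√(d₁d₂)) Σ_{i,j} ω_{d₁}^{ni} ω_{d₂}^{mj} |i⟩ ⊗ |j⟩ ⊗ |L^s(l, f(i,j))⟩ for s = 1, 2. Then B¹ and B² are mutually unbiased: |⟨φ¹_{n',m',l'} | φ²_{n,m,l}⟩| = 1/(d₁d₂) for all indices. -/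

import Mathlib

/-!
The `r`-sum in `⟨φ¹_{n',m',l'} | φ²_{n,m,l}⟩` only keeps the pairs `(i, j)` with
`L¹(l', f(i,j)) = L²(l, f(i,j))`. Since `f` is a bijection onto `Z_{d₁d₂}`, weak orthogonality
leaves exactly one such pair, so the inner product is a single product of two amplitudes, each
of modulus `1/√(d₁d₂)` because the phases are roots of unity.
-/

open Complex

/-- Component of `|φ^s_{n,m,l}⟩` at `|i⟩⊗|j⟩⊗|r⟩`, with `f(i,j) = d₂·i + j`. -/
noncomputable def phiC2 (d₁ d₂ : ℕ)
    (L : ZMod (d₁ * d₂) → ZMod (d₁ * d₂) → ZMod (d₁ * d₂))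
    (n : ZMod d₁) (m : ZMod d₂) (l : ZMod (d₁ * d₂))
    (i : ZMod d₁) (j : ZMod d₂) (r : ZMod (d₁ * d₂)) : ℂ :=
  ((Real.sqrt (d₁ * d₂) : ℂ))⁻¹ *
    Complex.exp (2 * Real.pi * Complex.I / d₁) ^ (n.val * i.val) *
    Complex.exp (2 * Real.pi * Complex.I / d₂) ^ (m.val * j.val) *
    (if L l (((d₂ * i.val + j.val : ℕ)) : ZMod (d₁ * d₂)) = r then 1 else 0)

noncomputable section

variable {d₁ d₂ : ℕ}

def pairIndex (d₁ d₂ : ℕ) (p : ZMod d₁ × ZMod d₂) : ZMod (d₁ * d₂) :=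
  ((d₂ * p.1.val + p.2.val : ℕ) : ZMod (d₁ * d₂))

section PairIndex

variable [NeZero d₁] [NeZero d₂]

theorem val_pairIndex (p : ZMod d₁ × ZMod d₂) :
    (pairIndex d₁ d₂ p).val = d₂ * p.1.val + p.2.val :=
  ZMod.val_cast_of_lt (Nat.mul_add_lt_mul_of_lt_of_lt p.1.val_lt p.2.val_lt)

theorem pairIndex_injective : Function.Injective (pairIndex d₁ d₂) := by
  rintro ⟨i, j⟩ ⟨i', j'⟩ h
  have hval := congrArg ZMod.val h
  simp only [val_pairIndex] at hval
  have hd₂ : 0 < d₂ := NeZero.pos d₂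
  have hj : j.val = j'.val := by
    simpa [Nat.mul_add_mod, Nat.mod_eq_of_lt j.val_lt, Nat.mod_eq_of_lt j'.val_lt] using
      congrArg (· % d₂) hval
  have hi : i.val = i'.val := by
    simpa [Nat.mul_add_div hd₂, Nat.div_eq_of_lt j.val_lt, Nat.div_eq_of_lt j'.val_lt] using
      congrArg (· / d₂) hval
  exact Prod.ext (ZMod.val_injective _ hi) (ZMod.val_injective _ hj)

theorem pairIndex_bijective : Function.Bijective (pairIndex d₁ d₂) :=
  (Fintype.bijective_iff_injective_and_card _).2 ⟨pairIndex_injective, by simp [ZMod.card]⟩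

end PairIndex

def phiAmp (d₁ d₂ : ℕ) (n : ZMod d₁) (m : ZMod d₂) (i : ZMod d₁) (j : ZMod d₂) : ℂ :=
  ((Real.sqrt (d₁ * d₂) : ℂ))⁻¹ *
    exp (2 * Real.pi * I / d₁) ^ (n.val * i.val) * exp (2 * Real.pi * I / d₂) ^ (m.val * j.val)

theorem phiC2_eq_phiAmp_mul (L : ZMod (d₁ * d₂) → ZMod (d₁ * d₂) → ZMod (d₁ * d₂))
    (n : ZMod d₁) (m : ZMod d₂) (l : ZMod (d₁ * d₂)) (i : ZMod d₁) (j : ZMod d₂)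
    (r : ZMod (d₁ * d₂)) :
    phiC2 d₁ d₂ L n m l i j r =
      phiAmp d₁ d₂ n m i j * if L l (pairIndex d₁ d₂ (i, j)) = r then 1 else 0 :=
  rfl

theorem norm_exp_two_pi_I_div_pow (d k : ℕ) : ‖exp (2 * Real.pi * I / d) ^ k‖ = 1 := by
  have : 2 * (Real.pi : ℂ) * I / d = ((2 * Real.pi / d : ℝ) : ℂ) * I := by push_cast; ring
  rw [this, norm_pow, norm_exp_ofReal_mul_I, one_pow]

theorem norm_phiAmp (n : ZMod d₁) (m : ZMod d₂) (i : ZMod d₁) (j : ZMod d₂) :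
    ‖phiAmp d₁ d₂ n m i j‖ = (Real.sqrt (d₁ * d₂))⁻¹ := by
  simp only [phiAmp, norm_mul, norm_inv, norm_real, Real.norm_eq_abs, norm_exp_two_pi_I_div_pow,
    mul_one, abs_of_nonneg (Real.sqrt_nonneg _)]

theorem sum_conj_mul_ite_mul_mul_ite {R ι : Type*} [CommSemiring R] [StarRing R] [Fintype ι]
    [DecidableEq ι] (x y : R) (P Q : ι) :
    ∑ r, starRingEnd R (x * if P = r then 1 else 0) * (y * if Q = r then 1 else 0) =
      if P = Q then starRingEnd R x * y else 0 := by
  rw [Finset.sum_eq_single P (fun r _ hr => by simp [Ne.symm hr]) (by simp)]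
  rcases eq_or_ne P Q with rfl | h
  · simp
  · simp [h, Ne.symm h]

theorem sum_conj_phiC2_mul_phiC2 [NeZero d₁] [NeZero d₂]
    (L₁ L₂ : ZMod (d₁ * d₂) → ZMod (d₁ * d₂) → ZMod (d₁ * d₂))
    (n' n : ZMod d₁) (m' m : ZMod d₂) (l' l : ZMod (d₁ * d₂)) :
    ∑ i : ZMod d₁, ∑ j : ZMod d₂, ∑ r : ZMod (d₁ * d₂),
      starRingEnd ℂ (phiC2 d₁ d₂ L₁ n' m' l' i j r) * phiC2 d₁ d₂ L₂ n m l i j r =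
    ∑ p : ZMod d₁ × ZMod d₂,
      if L₁ l' (pairIndex d₁ d₂ p) = L₂ l (pairIndex d₁ d₂ p) then
        starRingEnd ℂ (phiAmp d₁ d₂ n' m' p.1 p.2) * phiAmp d₁ d₂ n m p.1 p.2
      else 0 := by
  simp only [Fintype.sum_prod_type, phiC2_eq_phiAmp_mul, sum_conj_mul_ite_mul_mul_ite]

end

theorem mub_of_mwols_general (d₁ d₂ : ℕ) [NeZero d₁] [NeZero d₂]
    (L₁ L₂ : ZMod (d₁ * d₂) → ZMod (d₁ * d₂) → ZMod (d₁ * d₂))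
    (hweak : ∀ l' l : ZMod (d₁ * d₂), ∃! c : ZMod (d₁ * d₂), L₁ l' c = L₂ l c)
    (n' n : ZMod d₁) (m' m : ZMod d₂) (l' l : ZMod (d₁ * d₂)) :
    ‖∑ i : ZMod d₁, ∑ j : ZMod d₂, ∑ r : ZMod (d₁ * d₂),
      (starRingEnd ℂ) (phiC2 d₁ d₂ L₁ n' m' l' i j r) * phiC2 d₁ d₂ L₂ n m l i j r‖ =
      ((d₁ : ℝ) * d₂)⁻¹ := by
  obtain ⟨c, hc, hc_unique⟩ := hweak l' l
  obtain ⟨p₀, rfl⟩ := pairIndex_bijective.2 c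
  have hagree : ∀ p, L₁ l' (pairIndex d₁ d₂ p) = L₂ l (pairIndex d₁ d₂ p) ↔ p = p₀ :=
    fun p => ⟨fun h => pairIndex_injective (hc_unique _ h), fun h => h ▸ hc⟩
  simp only [sum_conj_phiC2_mul_phiC2, hagree, Finset.sum_ite_eq', Finset.mem_univ, if_true,
    norm_mul, norm_conj, norm_phiAmp]
  rw [← mul_inv, Real.mul_self_sqrt (by positivity)]

/-- If `L¹, L²` are mutually weak orthogonal Latin squares of order
`d₁d₂`, the two associated orthonormal bases of `C^{d₁} ⊗ C^{d₂} ⊗ C^{d₁d₂}` are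
mutually unbiased: all pairwise inner products have modulus `1/(d₁d₂)`. -/
theorem mub_of_mwols (d₁ d₂ : ℕ) [NeZero d₁] [NeZero d₂] [NeZero (d₁ * d₂)]
    (L₁ L₂ : ZMod (d₁ * d₂) → ZMod (d₁ * d₂) → ZMod (d₁ * d₂))
    (h₁r : ∀ l, Function.Bijective (L₁ l)) (h₁c : ∀ c, Function.Bijective fun l => L₁ l c)
    (h₂r : ∀ l, Function.Bijective (L₂ l)) (h₂c : ∀ c, Function.Bijective fun l => L₂ l c)
    (hweak : ∀ l' l : ZMod (d₁ * d₂), ∃! c : ZMod (d₁ * d₂), L₁ l' c = L₂ l c)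
    (n' n : ZMod d₁) (m' m : ZMod d₂) (l' l : ZMod (d₁ * d₂)) :
    ‖∑ i : ZMod d₁, ∑ j : ZMod d₂, ∑ r : ZMod (d₁ * d₂),
      (starRingEnd ℂ) (phiC2 d₁ d₂ L₁ n' m' l' i j r) * phiC2 d₁ d₂ L₂ n m l i j r‖ =
      ((d₁ : ℝ) * d₂)⁻¹ :=
  mub_of_mwols_general d₁ d₂ L₁ L₂ hweak n' n m' m l' l
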